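/- arXiv:1308.0544 — 7 statements merged into one kernel-verified Lean document; each statement's English description precedes it below -/
import Mathlib

section
/- In a plurality election with candidate set C and vote list V, if there exists an assignment of votes to the k manipulators and a partition (V1, V2) of all voters such that p is the unique winner of the subelection (C, V1), then there exists an assignment in which every manipulator placed in V1 votes for p (ranks p first) and p is still the unique winner of (C, V1). -/
/-- Plurality score of candidate `c` among the voters in `V`, where `b v` is
voter `v`'s top choice. -/
def pluralityScore {ι C : Type*} [DecidableEq C] (b : ι → C) (V : Finset ι) (c : C) : ℕ :=
  (V.filter fun v => b v = c).card

/-- `p` is the unique (plurality) winner of the subelection with voter set `V`. -/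
def pluralityUniqueWinner {ι C : Type*} [DecidableEq C] (b : ι → C) (V : Finset ι) (p : C) :
    Prop :=
  ∀ c : C, c ≠ p → pluralityScore b V c < pluralityScore b V p

section

variable {ι C : Type*} [DecidableEq C]

theorem pluralityScore_mono {b b' : ι → C} {V : Finset ι} {c : C}
    (h : ∀ v ∈ V, b v = c → b' v = c) : pluralityScore b V c ≤ pluralityScore b' V c :=
  Finset.card_le_card fun v hv => by
    rw [Finset.mem_filter] at hv ⊢
    exact ⟨hv.1, h v hv.1 hv.2⟩

theorem pluralityUniqueWinner.of_forall_eq_or_eq {b b' : ι → C} {V : Finset ι} {p : C}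
    (hw : pluralityUniqueWinner b V p) (h : ∀ v ∈ V, b' v = b v ∨ b' v = p) :
    pluralityUniqueWinner b' V p := by
  intro c hc
  have hc_le : pluralityScore b' V c ≤ pluralityScore b V c :=
    pluralityScore_mono fun v hv hvc => by
      rcases h v hv with hv' | hv'
      · rwa [← hv']
      · exact absurd (hv'.symm.trans hvc) hc.symm
  have hp_le : pluralityScore b V p ≤ pluralityScore b' V p :=
    pluralityScore_mono fun v hv hvp => by
      rcases h v hv with hv' | hv' <;> simp only [hv', hvp]
  exact hc_le.trans_lt ((hw c hc).trans_le hp_le)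

end

theorem stmt0_general {ι C : Type*} [DecidableEq C]
    (fixed : ι → C) (M : Finset ι) (p : C) (V1 : Finset ι)
    (h : ∃ b : ι → C, (∀ v, v ∉ M → b v = fixed v) ∧ pluralityUniqueWinner b V1 p) :
    ∃ b : ι → C, (∀ v, v ∉ M → b v = fixed v) ∧ (∀ m ∈ M, m ∈ V1 → b m = p) ∧
      pluralityUniqueWinner b V1 p := by
  classical
  obtain ⟨b, hb, hw⟩ := h
  refine ⟨fun v => if v ∈ M ∧ v ∈ V1 then p else b v, fun v hv => ?_, fun m hm hm1 => ?_,
    hw.of_forall_eq_or_eq fun v _ => ?_⟩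
  · simpa [hv] using hb v hv
  · simp [hm, hm1]
  · split_ifs <;> simp

/-- If some assignment of ballots to the manipulators (the voters in `M`) and some
partition `(V1, V1ᶜ)` make `p` the unique winner of `(C, V1)`, then there is an
assignment in which every manipulator in `V1` votes for `p` and `p` is still the
unique winner of `(C, V1)`. -/
theorem stmt0 {ι C : Type*} [Fintype ι] [DecidableEq ι] [DecidableEq C]
    (fixed : ι → C) (M : Finset ι) (p : C) (V1 : Finset ι)
    (h : ∃ b : ι → C, (∀ v, v ∉ M → b v = fixed v) ∧ pluralityUniqueWinner b V1 p) :
    ∃ b : ι → C, (∀ v, v ∉ M → b v = fixed v) ∧ (∀ m ∈ M, m ∈ V1 → b m = p) ∧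
      pluralityUniqueWinner b V1 p :=
  stmt0_general fixed M p V1 h
end

section
/- In a 3-candidate weighted veto election with candidates {p, a, b}, nonmanipulative weighted votes, and weighted manipulators, for any fixed action of the chair (adding or deleting a fixed set of nonmanipulative voters), the set of winners when all manipulators veto p makes p a winner only if p is a winner under every possible assignment of manipulator vetoes; equivalently, having every manipulator veto p minimizes p's score relative to both other candidates, so p wins against all-veto-p manipulators iff p wins against worst-case manipulators. -/
/-! Moving a voter's veto onto `p` costs `p` that voter's weight and gains every other candidate
at most that weight, so it never helps `p` relative to any rival. Redirecting all manipulators'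
vetoes to `p` is therefore the worst case for `p`, whatever the other vetoes are. -/

/-- Weighted veto score of candidate `c` among voters `V`: each voter of weight `w i`
gives `w i` points to every candidate except the one they veto. -/
def vetoScore {ι A : Type*} [DecidableEq A] (w : ι → ℕ) (veto : ι → A) (V : Finset ι)
    (c : A) : ℕ :=
  ∑ i ∈ V, if veto i = c then 0 else w i

/-- `p` is a winner of the weighted veto election among voters `V`. -/
def vetoWinner {ι A : Type*} [Fintype A] [DecidableEq A] (w : ι → ℕ) (veto : ι → A)
    (V : Finset ι) (p : A) : Prop :=
  ∀ c : A, vetoScore w veto V c ≤ vetoScore w veto V p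

section VetoRedirect

variable {ι A : Type*} [DecidableEq A]

lemma ite_veto_add_ite_veto_le {x y p c : A} (hy : y = x ∨ y = p) (n : ℕ) :
    (if x = c then 0 else n) + (if y = p then 0 else n) ≤
      (if y = c then 0 else n) + (if x = p then 0 else n) := by
  rcases hy with rfl | rfl
  · exact le_rfl
  · split_ifs <;> simp_all

lemma vetoScore_add_vetoScore_le (w : ι → ℕ) {veto veto' : ι → A} {V : Finset ι} {p : A}
    (h : ∀ i ∈ V, veto' i = veto i ∨ veto' i = p) (c : A) :
    vetoScore w veto V c + vetoScore w veto' V p ≤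
      vetoScore w veto' V c + vetoScore w veto V p := by
  simp only [vetoScore, ← Finset.sum_add_distrib]
  exact Finset.sum_le_sum fun i hi => ite_veto_add_ite_veto_le (h i hi) (w i)

lemma vetoWinner_of_vetoWinner_of_redirect [Fintype A] {w : ι → ℕ} {veto veto' : ι → A}
    {V : Finset ι} {p : A} (hwin : vetoWinner w veto' V p)
    (h : ∀ i ∈ V, veto' i = veto i ∨ veto' i = p) : vetoWinner w veto V p := fun c => by
  have := vetoScore_add_vetoScore_le w h c
  have := hwin c
  omega

end VetoRedirect

theorem stmt3_general {ι A : Type*} [Fintype A] [DecidableEq ι] [DecidableEq A]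
    (p : A)
    (w : ι → ℕ)
    (M : Finset ι) (fixedVeto : ι → A) (V : Finset ι) :
    vetoWinner w (fun i => if i ∈ M then p else fixedVeto i) V p ↔
      ∀ veto : ι → A, (∀ i, i ∉ M → veto i = fixedVeto i) → vetoWinner w veto V p := by
  refine ⟨fun hwin veto hveto => vetoWinner_of_vetoWinner_of_redirect hwin fun i _ => ?_,
    fun h => h _ fun i hi => if_neg hi⟩
  by_cases hi : i ∈ M
  · exact Or.inr (if_pos hi)
  · exact Or.inl ((if_neg hi).trans (hveto i hi).symm)

/-- In a 3-candidate weighted veto election (candidates `p, a, b`), for any fixed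
voter set `V` (the result of the chair's control action) and fixed vetoes of the
nonmanipulators, `p` wins when all manipulators veto `p` iff `p` wins under every
possible assignment of manipulator vetoes. -/
theorem stmt3 {ι A : Type*} [Fintype ι] [Fintype A] [DecidableEq ι] [DecidableEq A]
    (p a b : A) (hpa : p ≠ a) (hpb : p ≠ b) (hab : a ≠ b)
    (hall : ∀ c : A, c = p ∨ c = a ∨ c = b)
    (w : ι → ℕ) (hw : ∀ i, 0 < w i)
    (M : Finset ι) (fixedVeto : ι → A) (V : Finset ι) :
    vetoWinner w (fun i => if i ∈ M then p else fixedVeto i) V p ↔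
      ∀ veto : ι → A, (∀ i, i ∉ M → veto i = fixedVeto i) → vetoWinner w veto V p :=
  stmt3_general p w M fixedVeto V
end

section
/- For positive integers k_1,...,k_t summing to 2K, assigning to each voter i of weight k_i a choice c_i ∈ {a,b} (their top candidate, with p ranked last), the Borda score of a under weighted Borda over {p,a,b} equals 2K plus the sum of k_i over voters choosing a. Hence score(a) = 3K is achievable iff some subsequence of the k_i sums to K. -/
open Finset

theorem sum_mul_ite_two_one {ι R : Type*} [CommSemiring R] (s : Finset ι) (k : ι → R)
    (c : ι → Bool) :
    ∑ i ∈ s, k i * (if c i then 2 else 1) = ∑ i ∈ s, k i + ∑ i ∈ s with c i = true, k i := by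
  rw [sum_filter, ← sum_add_distrib]
  refine sum_congr rfl fun i _ => ?_
  cases c i <;> simp [mul_two]

theorem exists_bool_sum_filter_eq_iff {ι M : Type*} [Fintype ι] [DecidableEq ι] [AddCommMonoid M]
    (f : ι → M) (x : M) :
    (∃ c : ι → Bool, ∑ i with c i = true, f i = x) ↔ ∃ S : Finset ι, ∑ i ∈ S, f i = x := by
  constructor
  · rintro ⟨c, hc⟩
    exact ⟨_, hc⟩
  · rintro ⟨S, hS⟩
    refine ⟨fun i => decide (i ∈ S), ?_⟩
    simpa only [decide_eq_true_eq, filter_mem_eq_inter, univ_inter] using hS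

theorem stmt7_general (t K : ℕ) (k : Fin t → ℕ)
    (hsum : ∑ i, k i = 2 * K) :
    (∀ choice : Fin t → Bool,
        (∑ i, k i * (if choice i then 2 else 1)) =
          2 * K + ∑ i ∈ Finset.univ.filter fun i => choice i = true, k i) ∧
    ((∃ choice : Fin t → Bool, (∑ i, k i * (if choice i then 2 else 1)) = 3 * K) ↔
      ∃ S : Finset (Fin t), ∑ i ∈ S, k i = K) := by
  have score : ∀ choice : Fin t → Bool,
      (∑ i, k i * (if choice i then 2 else 1)) =
        2 * K + ∑ i ∈ Finset.univ.filter fun i => choice i = true, k i := fun choice => by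
    rw [sum_mul_ite_two_one, hsum]
  refine ⟨score, ?_⟩
  rw [← exists_bool_sum_filter_eq_iff]
  refine exists_congr fun choice => ?_
  rw [score]
  omega

/-- For positive weights `k i` summing to `2K`, if each voter `i` ranks `p` last and
tops `a` when `choice i = true` (contributing `2 * k i` to `a` and `k i` to `b`) and
tops `b` otherwise, then `a`'s weighted Borda score equals `2K` plus the total weight
of voters topping `a`; hence score `3K` for `a` is achievable iff some subsequence of
the weights sums to `K`. -/
theorem stmt7 (t K : ℕ) (k : Fin t → ℕ) (hpos : ∀ i, 0 < k i)
    (hsum : ∑ i, k i = 2 * K) :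
    (∀ choice : Fin t → Bool,
        (∑ i, k i * (if choice i then 2 else 1)) =
          2 * K + ∑ i ∈ Finset.univ.filter fun i => choice i = true, k i) ∧
    ((∃ choice : Fin t → Bool, (∑ i, k i * (if choice i then 2 else 1)) = 3 * K) ↔
      ∃ S : Finset (Fin t), ∑ i ∈ S, k i = K) :=
  stmt7_general t K k hsum
end

section
/- In an approval election with voters V containing manipulators, if there exists a partition (V1, V2) of V such that p is not a winner of the two-round partition-of-voters election in the ties-eliminate model when all manipulators approve only p, then there exists a partition (V1', V2') such that for every possible manipulation, p is not a winner of the resulting two-round election. -/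
/-- Approval score of `c` among voters in `V`. -/
def aScore {ι C : Type*} (app : ι → C → Bool) (V : Finset ι) (c : C) : ℕ :=
  (V.filter fun v => app v c = true).card

/-- `c` is the unique approval winner of the subelection with voter set `V`. -/
def aUnique {ι C : Type*} [Fintype C] (app : ι → C → Bool) (V : Finset ι) (c : C) : Prop :=
  ∀ d : C, d ≠ c → aScore app V d < aScore app V c

/-- In the ties-eliminate model with voter partition `(V1, V1ᶜ)`, `c` is promoted to the
final round iff it uniquely wins one of the two subelections. -/
def promotedTE {ι C : Type*} [Fintype ι] [Fintype C] [DecidableEq ι]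
    (app : ι → C → Bool) (V1 : Finset ι) (c : C) : Prop :=
  aUnique app V1 c ∨ aUnique app V1ᶜ c

/-- `p` is a winner of the two-round partition-of-voters (TE) approval election with
partition `(V1, V1ᶜ)`: `p` is promoted and has maximum approval score (over all voters)
among the promoted candidates. -/
def pvteWin {ι C : Type*} [Fintype ι] [Fintype C] [DecidableEq ι]
    (app : ι → C → Bool) (V1 : Finset ι) (p : C) : Prop :=
  promotedTE app V1 p ∧
    ∀ c : C, promotedTE app V1 c → aScore app Finset.univ c ≤ aScore app Finset.univ p

/-!
Let `σ` be the profile in which every manipulator approves only `p`. Passing from any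
manipulation `m` to `σ` can only raise the score of `p` and only lower the score of every
other candidate, in every set of voters. Hence if `p` is not even promoted under `σ` for the
given partition, it is promoted under no manipulation. Otherwise `p` loses under `σ` to some
candidate `c` with a strictly larger total score, and then the trivial partition `(∅, V)`
defeats `p` under every manipulation: the empty half promotes nobody, and `p` cannot be
the unique winner of the whole electorate since `c` beats it there already.
-/

open Finset

section Scores

variable {ι C : Type*}

theorem aScore_le_aScore {app app' : ι → C → Bool} {V : Finset ι} {c c' : C}
    (h : ∀ v ∈ V, app v c = true → app' v c' = true) : aScore app V c ≤ aScore app' V c' :=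
  card_le_card fun v hv => by
    simp only [mem_filter] at hv ⊢
    exact ⟨hv.1, h v hv.1 hv.2⟩

variable [Fintype C]

theorem aUnique.mono {app app' : ι → C → Bool} {V : Finset ι} {p : C} (hu : aUnique app V p)
    (hp : aScore app V p ≤ aScore app' V p)
    (hd : ∀ d, d ≠ p → aScore app' V d ≤ aScore app V d) : aUnique app' V p :=
  fun d hdp => (hd d hdp).trans_lt ((hu d hdp).trans_le hp)

theorem promotedTE_empty_iff [Fintype ι] [DecidableEq ι] [Nontrivial C]
    {app : ι → C → Bool} {c : C} : promotedTE app ∅ c ↔ aUnique app univ c := by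
  obtain ⟨d, hdc⟩ := exists_ne c
  have hempty : ¬ aUnique app ∅ c := fun hu => by simpa [aScore] using hu d hdc
  simp [promotedTE, hempty]

end Scores

section Manipulation

variable {ι C : Type*} [DecidableEq ι] [DecidableEq C] {fixed m : ι → C → Bool} {M : Finset ι}
  {p : C}

def approveOnly (fixed : ι → C → Bool) (M : Finset ι) (p : C) : ι → C → Bool :=
  fun v c => if v ∈ M then decide (c = p) else fixed v c

theorem aScore_le_aScore_approveOnly (hm : ∀ v, v ∉ M → ∀ c, m v c = fixed v c)
    (V : Finset ι) : aScore m V p ≤ aScore (approveOnly fixed M p) V p :=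
  aScore_le_aScore fun v _ hv => by
    by_cases hvM : v ∈ M
    · simp [approveOnly, hvM]
    · simpa [approveOnly, hvM, hm v hvM] using hv

theorem aScore_approveOnly_le_of_ne (hm : ∀ v, v ∉ M → ∀ c, m v c = fixed v c)
    (V : Finset ι) {d : C} (hd : d ≠ p) : aScore (approveOnly fixed M p) V d ≤ aScore m V d :=
  aScore_le_aScore fun v _ hv => by
    by_cases hvM : v ∈ M
    · exact absurd (by simpa [approveOnly, hvM] using hv) hd
    · simpa [approveOnly, hvM, hm v hvM] using hv

theorem promotedTE.to_approveOnly [Fintype ι] [Fintype C] {V1 : Finset ι}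
    (hm : ∀ v, v ∉ M → ∀ c, m v c = fixed v c) (hp : promotedTE m V1 p) :
    promotedTE (approveOnly fixed M p) V1 p := by
  have key : ∀ V, aUnique m V p → aUnique (approveOnly fixed M p) V p := fun V hu =>
    hu.mono (aScore_le_aScore_approveOnly hm V)
      fun _ hd => aScore_approveOnly_le_of_ne hm V hd
  exact hp.imp (key _) (key _)

end Manipulation

/-- If some partition makes `p` a non-winner when all manipulators approve only `p`,
then some partition makes `p` a non-winner under every possible manipulation. -/
theorem stmt8 {ι C : Type*} [Fintype ι] [Fintype C] [DecidableEq ι] [DecidableEq C]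
    (fixed : ι → C → Bool) (M : Finset ι) (p : C)
    (h : ∃ V1 : Finset ι,
        ¬ pvteWin (fun v c => if v ∈ M then decide (c = p) else fixed v c) V1 p) :
    ∃ V1 : Finset ι, ∀ m : ι → C → Bool,
      (∀ v, v ∉ M → ∀ c, m v c = fixed v c) → ¬ pvteWin m V1 p := by
  obtain ⟨V1, hV1⟩ := h
  change ¬ pvteWin (approveOnly fixed M p) V1 p at hV1
  by_cases hprom : promotedTE (approveOnly fixed M p) V1 p
  · obtain ⟨c, -, hc⟩ : ∃ c, promotedTE (approveOnly fixed M p) V1 c ∧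
        aScore (approveOnly fixed M p) univ p < aScore (approveOnly fixed M p) univ c := by
      simpa [pvteWin, hprom] using hV1
    have hcp : c ≠ p := by rintro rfl; exact lt_irrefl _ hc
    have : Nontrivial C := ⟨⟨c, p, hcp⟩⟩
    refine ⟨∅, fun m hm hwin => ?_⟩
    have hu := promotedTE_empty_iff.1 hwin.1 c hcp
    have hp := aScore_le_aScore_approveOnly (p := p) hm univ
    have hc' := aScore_approveOnly_le_of_ne hm univ hcp
    omega
  · exact ⟨V1, fun m hm hwin => hprom (hwin.1.to_approveOnly hm)⟩
end

section
/- In a plurality election with partition of voters (ties-eliminate model), if there exists a partition (V1, V2) such that p is not a winner when every manipulator votes for p, then there exists a partition such that for all possible manipulator ballots p is not a winner of the two-round election. -/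
/-- Plurality score of `c` among voters `V` when the election is restricted to the
candidate subset `S`: voter `v` (with ranking `b v`, smaller is better) votes for the
candidate of `S` they rank strictly above every other member of `S`. -/
def pScoreOn {ι C : Type*} [Fintype C] [DecidableEq C] (b : ι → C → ℕ) (V : Finset ι)
    (S : Finset C) (c : C) : ℕ :=
  (V.filter fun v => c ∈ S ∧ ∀ d ∈ S, d ≠ c → b v c < b v d).card

/-- `c` is the unique plurality winner of the subelection `(C, V)` (full candidate set). -/
def pUnique {ι C : Type*} [Fintype C] [DecidableEq C] (b : ι → C → ℕ) (V : Finset ι)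
    (c : C) : Prop :=
  ∀ d : C, d ≠ c → pScoreOn b V Finset.univ d < pScoreOn b V Finset.univ c

/-- Ties-eliminate promotion for partition `(V1, V1ᶜ)`. -/
def pPromoted {ι C : Type*} [Fintype ι] [Fintype C] [DecidableEq ι] [DecidableEq C]
    (b : ι → C → ℕ) (V1 : Finset ι) (c : C) : Prop :=
  pUnique b V1 c ∨ pUnique b V1ᶜ c

open Classical in
/-- `p` wins the two-round plurality partition-of-voters (TE) election with partition
`(V1, V1ᶜ)`: `p` is promoted and has maximal score in the runoff among the promoted
candidates, held over all voters. -/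
noncomputable def pPvteWin {ι C : Type*} [Fintype ι] [Fintype C] [DecidableEq ι]
    [DecidableEq C] (b : ι → C → ℕ) (V1 : Finset ι) (p : C) : Prop :=
  pPromoted b V1 p ∧
    ∀ c ∈ Finset.univ.filter (pPromoted b V1),
      pScoreOn b Finset.univ (Finset.univ.filter (pPromoted b V1)) c ≤
        pScoreOn b Finset.univ (Finset.univ.filter (pPromoted b V1)) p


/-!
Let `b₀` be the profile in which every manipulator ranks `p` first. If `p` is not even promoted
under `b₀`, it is promoted under no profile, since raising `p` to the top only helps `p` and
hurts every rival; so the same partition works. Otherwise some promoted rival `c` beats `p` in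
the runoff under `b₀`, and `c` is the unique winner of one half `U`. Move every manipulator out
of `U`: the honest half `U \ M` still elects `c` whatever the manipulators do, and since `b₀`
already gives `p` every manipulator's vote, `c` beats `p` head-to-head under every profile.
-/

section Plurality

variable {ι C : Type*} [Fintype C] [DecidableEq C]

lemma pScoreOn_mono (b : ι → C → ℕ) {V W : Finset ι} (h : V ⊆ W) (S : Finset C) (c : C) :
    pScoreOn b V S c ≤ pScoreOn b W S c :=
  Finset.card_le_card (Finset.filter_subset_filter _ h)

lemma pScoreOn_congr {b b' : ι → C → ℕ} {V : Finset ι} (h : ∀ v ∈ V, b v = b' v)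
    (S : Finset C) (c : C) : pScoreOn b V S c = pScoreOn b' V S c := by
  unfold pScoreOn
  congr 1
  exact Finset.filter_congr fun v hv => by rw [h v hv]

lemma pUnique_congr {b b' : ι → C → ℕ} {V : Finset ι} (h : ∀ v ∈ V, b v = b' v) (c : C) :
    pUnique b V c ↔ pUnique b' V c := by
  simp only [pUnique, pScoreOn_congr h]

lemma pUnique.eq {b : ι → C → ℕ} {V : Finset ι} {c d : C} (hc : pUnique b V c)
    (hd : pUnique b V d) : c = d := by
  by_contra hcd
  exact lt_asymm (hc d (Ne.symm hcd)) (hd c hcd)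

section RaiseToTop

variable {b b₀ : ι → C → ℕ} {p : C} (hb : ∀ v, b₀ v = b v ∨ ∀ d, d ≠ p → b₀ v p < b₀ v d)
include hb

lemma pScoreOn_le_of_raise (V : Finset ι) (S : Finset C) :
    pScoreOn b V S p ≤ pScoreOn b₀ V S p := by
  refine Finset.card_le_card fun v hv => ?_
  simp only [Finset.mem_filter] at hv ⊢
  obtain ⟨hvV, hpS, hwin⟩ := hv
  refine ⟨hvV, hpS, fun d hd hdp => ?_⟩
  rcases hb v with hbv | htop
  · rw [hbv]; exact hwin d hd hdp
  · exact htop d hdp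

lemma pScoreOn_le_of_raise_of_ne (V : Finset ι) {S : Finset C} (hpS : p ∈ S) {c : C}
    (hcp : c ≠ p) : pScoreOn b₀ V S c ≤ pScoreOn b V S c := by
  refine Finset.card_le_card fun v hv => ?_
  simp only [Finset.mem_filter] at hv ⊢
  obtain ⟨hvV, hcS, hwin⟩ := hv
  rcases hb v with hbv | htop
  · rw [← hbv]; exact ⟨hvV, hcS, hwin⟩
  · exact absurd (hwin p hpS hcp.symm) (htop c hcp).not_gt

lemma pUnique.of_raise {V : Finset ι} (h : pUnique b V p) : pUnique b₀ V p := fun d hdp =>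
  calc pScoreOn b₀ V Finset.univ d
      ≤ pScoreOn b V Finset.univ d := pScoreOn_le_of_raise_of_ne hb V (Finset.mem_univ p) hdp
    _ < pScoreOn b V Finset.univ p := h d hdp
    _ ≤ pScoreOn b₀ V Finset.univ p := pScoreOn_le_of_raise hb V Finset.univ

end RaiseToTop

lemma pScoreOn_sdiff_of_ne [DecidableEq ι] {b : ι → C → ℕ} {p c : C} {M : Finset ι}
    (htop : ∀ m ∈ M, ∀ d, d ≠ p → b m p < b m d) (U : Finset ι) {S : Finset C} (hpS : p ∈ S)
    (hcp : c ≠ p) : pScoreOn b (U \ M) S c = pScoreOn b U S c := by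
  unfold pScoreOn
  congr 1
  ext v
  simp only [Finset.mem_filter, Finset.mem_sdiff, and_congr_left_iff, and_iff_left_iff_imp]
  exact fun hwin _ hvM => (htop v hvM c hcp).not_gt (hwin.2 p hpS hcp.symm)

lemma pUnique.sdiff_of_ne [DecidableEq ι] {b : ι → C → ℕ} {p c : C} {M U : Finset ι}
    (htop : ∀ m ∈ M, ∀ d, d ≠ p → b m p < b m d) (hc : pUnique b U c) (hcp : c ≠ p) :
    pUnique b (U \ M) c := fun d hdc =>
  calc pScoreOn b (U \ M) Finset.univ d
      ≤ pScoreOn b U Finset.univ d := pScoreOn_mono b Finset.sdiff_subset _ d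
    _ < pScoreOn b U Finset.univ c := hc d hdc
    _ = pScoreOn b (U \ M) Finset.univ c :=
      (pScoreOn_sdiff_of_ne htop U (Finset.mem_univ p) hcp).symm

end Plurality

section TiesEliminate

variable {ι C : Type*} [Fintype ι] [Fintype C] [DecidableEq ι] [DecidableEq C]
  {b : ι → C → ℕ} {V : Finset ι}

lemma pPromoted_iff_of_pUnique {x y : C} (hx : pUnique b V x) (hy : pUnique b Vᶜ y) (d : C) :
    pPromoted b V d ↔ d = x ∨ d = y := by
  constructor
  · rintro (hd | hd)
    exacts [Or.inl (hd.eq hx), Or.inr (hd.eq hy)]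
  · rintro (rfl | rfl)
    exacts [Or.inl hx, Or.inr hy]

lemma filter_pPromoted_eq_pair [DecidablePred (pPromoted b V)] {x y : C} (hx : pUnique b V x)
    (hy : pUnique b Vᶜ y) : Finset.univ.filter (pPromoted b V) = {x, y} := by
  ext d
  simp [pPromoted_iff_of_pUnique hx hy]

lemma not_pPvteWin_of_pUnique_compl {p c : C} (hcp : c ≠ p) (hc : pUnique b Vᶜ c)
    (hrun : pScoreOn b Finset.univ {p, c} p < pScoreOn b Finset.univ {p, c} c) :
    ¬ pPvteWin b V p := by
  classical
  rintro ⟨hprom, hmax⟩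
  have hp : pUnique b V p := hprom.resolve_right fun hp => hcp (hc.eq hp)
  rw [filter_pPromoted_eq_pair hp hc] at hmax
  exact (hmax c (by simp)).not_gt hrun

lemma exists_rival_of_not_pPvteWin {p : C} (hprom : pPromoted b V p) (hlose : ¬ pPvteWin b V p) :
    ∃ c, c ≠ p ∧ ∃ U : Finset ι, pUnique b U c ∧
      pScoreOn b Finset.univ {p, c} p < pScoreOn b Finset.univ {p, c} c := by
  classical
  simp only [pPvteWin, hprom, true_and, not_forall, not_le, Finset.mem_filter,
    Finset.mem_univ] at hlose
  obtain ⟨c, hcprom, hrun⟩ := hlose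
  have hcp : c ≠ p := by rintro rfl; exact lt_irrefl _ hrun
  rcases hprom with hp | hp <;> rcases hcprom with hc | hc
  · exact absurd (hc.eq hp) hcp
  · exact ⟨c, hcp, Vᶜ, hc, by rwa [filter_pPromoted_eq_pair hp hc] at hrun⟩
  · refine ⟨c, hcp, V, hc, ?_⟩
    rwa [filter_pPromoted_eq_pair hc hp, Finset.pair_comm] at hrun
  · exact absurd (hc.eq hp) hcp

end TiesEliminate

theorem stmt9_general {ι C : Type*} [Fintype ι] [Fintype C] [DecidableEq ι] [DecidableEq C]
    (fixed : ι → C → ℕ) (M : Finset ι) (p : C)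
    (h : ∃ V1 : Finset ι, ∃ b0 : ι → C → ℕ,
        (∀ v, Function.Injective (b0 v)) ∧
        (∀ v, v ∉ M → b0 v = fixed v) ∧
        (∀ m ∈ M, ∀ d : C, d ≠ p → b0 m p < b0 m d) ∧
        ¬ pPvteWin b0 V1 p) :
    ∃ V1 : Finset ι, ∀ b : ι → C → ℕ,
      (∀ v, Function.Injective (b v)) → (∀ v, v ∉ M → b v = fixed v) →
        ¬ pPvteWin b V1 p := by
  obtain ⟨V1, b0, -, hb0, htop, hlose⟩ := h
  have hraise : ∀ b : ι → C → ℕ, (∀ v, v ∉ M → b v = fixed v) →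
      ∀ v, b0 v = b v ∨ ∀ d, d ≠ p → b0 v p < b0 v d := fun b hb v => by
    by_cases hvM : v ∈ M
    exacts [Or.inr (htop v hvM), Or.inl ((hb0 v hvM).trans (hb v hvM).symm)]
  by_cases hprom : pPromoted b0 V1 p
  · obtain ⟨c, hcp, U, hcU, hrun⟩ := exists_rival_of_not_pPvteWin hprom hlose
    refine ⟨(U \ M)ᶜ, fun b _ hb => not_pPvteWin_of_pUnique_compl hcp ?_ ?_⟩
    · have hagree : ∀ v ∈ U \ M, b0 v = b v := fun v hv =>
        (hb0 v (Finset.mem_sdiff.1 hv).2).trans (hb v (Finset.mem_sdiff.1 hv).2).symm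
      rw [compl_compl, ← pUnique_congr hagree]
      exact hcU.sdiff_of_ne htop hcp
    · have hpS : p ∈ ({p, c} : Finset C) := Finset.mem_insert_self p {c}
      calc pScoreOn b Finset.univ {p, c} p
          ≤ pScoreOn b0 Finset.univ {p, c} p := pScoreOn_le_of_raise (hraise b hb) _ _
        _ < pScoreOn b0 Finset.univ {p, c} c := hrun
        _ ≤ pScoreOn b Finset.univ {p, c} c :=
          pScoreOn_le_of_raise_of_ne (hraise b hb) _ hpS hcp
  · exact ⟨V1, fun b _ hb hwin =>
      hprom (hwin.1.imp (·.of_raise (hraise b hb)) (·.of_raise (hraise b hb)))⟩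

/-- If there is a partition under which `p` is not a winner when every manipulator votes
for `p` (ranks `p` first), then there is a partition under which, for all manipulator
ballots, `p` is not a winner of the two-round election. -/
theorem stmt9 {ι C : Type*} [Fintype ι] [Fintype C] [DecidableEq ι] [DecidableEq C]
    (fixed : ι → C → ℕ) (hfix : ∀ v, Function.Injective (fixed v)) (M : Finset ι) (p : C)
    (h : ∃ V1 : Finset ι, ∃ b0 : ι → C → ℕ,
        (∀ v, Function.Injective (b0 v)) ∧
        (∀ v, v ∉ M → b0 v = fixed v) ∧
        (∀ m ∈ M, ∀ d : C, d ≠ p → b0 m p < b0 m d) ∧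
        ¬ pPvteWin b0 V1 p) :
    ∃ V1 : Finset ι, ∀ b : ι → C → ℕ,
      (∀ v, Function.Injective (b v)) → (∀ v, v ∉ M → b v = fixed v) →
        ¬ pPvteWin b V1 p :=
  stmt9_general fixed M p h
end

section
/- In a Condorcet election, if a voter's ballot ranks p first, then for every other candidate b, the number of voters preferring p to b is maximized over all possible ballots for that voter; consequently, setting all manipulator ballots to rank p first maximizes, simultaneously for all b ≠ p, the count of voters preferring p to b, and p is a Condorcet winner with some manipulator ballots iff p is a Condorcet winner when all manipulators rank p first. -/
/-- Number of voters preferring `q` to `r` (rankings: smaller value = more preferred). -/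
def prefCount {ι C : Type*} [Fintype ι] (b : ι → C → ℕ) (q r : C) : ℕ :=
  (Finset.univ.filter fun v : ι => b v q < b v r).card

/-- `p` is a Condorcet winner: for every other candidate, strictly more than half of the
voters prefer `p`. -/
def condorcetWin {ι C : Type*} [Fintype ι] [Fintype C] (b : ι → C → ℕ) (p : C) : Prop :=
  ∀ q : C, q ≠ p → Fintype.card ι < 2 * prefCount b p q

/-- Voter `v` ranks `p` first in ballot assignment `b`. -/
def ranksFirst {ι C : Type*} (b : ι → C → ℕ) (v : ι) (p : C) : Prop :=
  ∀ q : C, q ≠ p → b v p < b v q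

/-! A voter who ranks `p` first prefers `p` to every other candidate, so replacing ballots by
ballots ranking `p` first can only enlarge the set of voters preferring `p` to `q`, for each
`q ≠ p`; and being a Condorcet winner is monotone in these counts. -/

section

variable {ι C : Type*} [Fintype ι]

theorem prefCount_le_prefCount {b b' : ι → C → ℕ} {q r : C}
    (h : ∀ v, b v q < b v r → b' v q < b' v r) : prefCount b q r ≤ prefCount b' q r :=
  Finset.card_le_card fun v hv => by
    simp only [Finset.mem_filter, Finset.mem_univ, true_and] at hv ⊢
    exact h v hv

theorem prefCount_le_of_ranksFirst {b b' : ι → C → ℕ} {p q : C} {S : Set ι}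
    (hfirst : ∀ v ∈ S, ranksFirst b v p) (hagree : ∀ v ∉ S, b' v = b v) (hq : q ≠ p) :
    prefCount b' p q ≤ prefCount b p q :=
  prefCount_le_prefCount fun v hv => by
    by_cases hv' : v ∈ S
    · exact hfirst v hv' q hq
    · rwa [← hagree v hv']

theorem condorcetWin.mono [Fintype C] {b b' : ι → C → ℕ} {p : C} (hwin : condorcetWin b p)
    (hle : ∀ q, q ≠ p → prefCount b p q ≤ prefCount b' p q) : condorcetWin b' p :=
  fun q hq => (hwin q hq).trans_le (Nat.mul_le_mul_left 2 (hle q hq))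

end

theorem stmt11_general {ι C : Type*} [Fintype ι] [Fintype C]
    (M : Finset ι) (fixed : ι → C → ℕ) (p : C) :
    (∀ b b' : ι → C → ℕ, (∀ v, Function.Injective (b v)) →
      (∀ v, Function.Injective (b' v)) → ∀ v0 : ι, ranksFirst b v0 p →
      (∀ v, v ≠ v0 → b' v = b v) →
      ∀ q : C, q ≠ p → prefCount b' p q ≤ prefCount b p q) ∧
    (∀ b0 : ι → C → ℕ, (∀ v, Function.Injective (b0 v)) →
      (∀ v, v ∉ M → b0 v = fixed v) → (∀ m ∈ M, ranksFirst b0 m p) →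
      ((∀ b : ι → C → ℕ, (∀ v, Function.Injective (b v)) → (∀ v, v ∉ M → b v = fixed v) →
          ∀ q : C, q ≠ p → prefCount b p q ≤ prefCount b0 p q) ∧
       ((∃ b : ι → C → ℕ, (∀ v, Function.Injective (b v)) ∧
            (∀ v, v ∉ M → b v = fixed v) ∧ condorcetWin b p) ↔ condorcetWin b0 p))) := by
  refine ⟨fun b b' _ _ v0 hfirst hagree q hq => ?_, fun b0 hinj0 hfixed0 hfirst => ?_⟩
  · exact prefCount_le_of_ranksFirst (S := {v0}) (by simpa using hfirst) hagree hq
  · have hmax : ∀ b : ι → C → ℕ, (∀ v, v ∉ M → b v = fixed v) →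
        ∀ q, q ≠ p → prefCount b p q ≤ prefCount b0 p q := fun b hfixed q hq =>
      prefCount_le_of_ranksFirst (S := ↑M) hfirst
        (fun v hv => (hfixed v hv).trans (hfixed0 v hv).symm) hq
    refine ⟨fun b _ hfixed => hmax b hfixed, ?_⟩
    exact ⟨fun ⟨b, _, hfixed, hwin⟩ => hwin.mono (hmax b hfixed),
      fun hwin => ⟨b0, hinj0, hfixed0, hwin⟩⟩

/-- (1) A ballot ranking `p` first maximizes, for every `q ≠ p`, the number of voters
preferring `p` to `q`, over all alternative ballots for that voter.  (2) Consequently,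
setting all manipulator ballots to rank `p` first simultaneously maximizes these counts
over all manipulations, and `p` is a Condorcet winner under some manipulation iff `p` is
a Condorcet winner when all manipulators rank `p` first. -/
theorem stmt11 {ι C : Type*} [Fintype ι] [Fintype C] [DecidableEq ι] [DecidableEq C]
    (M : Finset ι) (fixed : ι → C → ℕ) (hfix : ∀ v, Function.Injective (fixed v)) (p : C) :
    (∀ b b' : ι → C → ℕ, (∀ v, Function.Injective (b v)) →
      (∀ v, Function.Injective (b' v)) → ∀ v0 : ι, ranksFirst b v0 p →
      (∀ v, v ≠ v0 → b' v = b v) →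
      ∀ q : C, q ≠ p → prefCount b' p q ≤ prefCount b p q) ∧
    (∀ b0 : ι → C → ℕ, (∀ v, Function.Injective (b0 v)) →
      (∀ v, v ∉ M → b0 v = fixed v) → (∀ m ∈ M, ranksFirst b0 m p) →
      ((∀ b : ι → C → ℕ, (∀ v, Function.Injective (b v)) → (∀ v, v ∉ M → b v = fixed v) →
          ∀ q : C, q ≠ p → prefCount b p q ≤ prefCount b0 p q) ∧
       ((∃ b : ι → C → ℕ, (∀ v, Function.Injective (b v)) ∧
            (∀ v, v ∉ M → b v = fixed v) ∧ condorcetWin b p) ↔ condorcetWin b0 p))) :=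
  stmt11_general M fixed p
end

section
/- In a plurality election with candidate set C, votes V containing k manipulators, unregistered votes U, and add limit L: with manipulators cooperating with the chair (all ranking p first) and the chair adding x = min(L, number of unregistered votes ranking p first plus unregistered manipulators) voters whose ballots rank p first, p becomes a winner iff score_V(p) + x ≥ max over d ≠ p of score_V(d), where scores count first-place votes among registered non-added voters with manipulators voting for p. -/
/-- Plurality score of `c` among the voters of the finite type `ι` with top choices `b`. -/
def plScore {ι C : Type*} [Fintype ι] [DecidableEq C] (b : ι → C) (c : C) : ℕ :=
  (Finset.univ.filter fun v : ι => b v = c).card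

open Finset

section AddingVoters

variable {υ C : Type*} [Fintype υ] [DecidableEq C]

theorem card_filter_eq_le_min_plScore (b : υ → C) (p : C) {S : Finset υ} {L : ℕ}
    (hS : #S ≤ L) : #(S.filter (b · = p)) ≤ min L (plScore b p) :=
  le_min ((card_filter_le _ _).trans hS) (card_le_card (filter_subset_filter _ (subset_univ S)))

theorem exists_subset_forall_mem_eq_card_eq_min (b : υ → C) (p : C) (L : ℕ) :
    ∃ S : Finset υ, (∀ u ∈ S, b u = p) ∧ #S = min L (plScore b p) := by
  obtain ⟨S, hS, hcard⟩ := exists_subset_card_eq (min_le_right L (plScore b p))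
  exact ⟨S, fun u hu => (mem_filter.1 (hS hu)).2, hcard⟩

/-- Added votes for candidates other than `p` never help `p`, so the chair does best by adding
as many `p`-votes as the pool and the limit allow. -/
theorem exists_card_le_add_le_iff_le_add_min (b : υ → C) (s : C → ℕ) (p : C) (L : ℕ) :
    (∃ S : Finset υ, #S ≤ L ∧
        ∀ d, d ≠ p → s d + #(S.filter (b · = d)) ≤ s p + #(S.filter (b · = p))) ↔
      ∀ d, d ≠ p → s d ≤ s p + min L (plScore b p) := by
  constructor
  · rintro ⟨S, hSL, hS⟩ d hd
    have hpVotes := card_filter_eq_le_min_plScore b p hSL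
    have hdBeaten := hS d hd
    omega
  · intro h
    obtain ⟨S, hSp, hcard⟩ := exists_subset_forall_mem_eq_card_eq_min b p L
    refine ⟨S, hcard.trans_le (min_le_left _ _), fun d hd => ?_⟩
    have hfp : S.filter (b · = p) = S := filter_true_of_mem hSp
    have hfd : S.filter (b · = d) = ∅ :=
      filter_false_of_mem fun u hu hud => hd (hud.symm.trans (hSp u hu))
    rw [hfp, hfd, card_empty, add_zero, hcard]
    exact h d hd

end AddingVoters

theorem plScore_ite_mem_self {υ C : Type*} [Fintype υ] [DecidableEq υ] [DecidableEq C]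
    (MU : Finset υ) (f : υ → C) (p : C) :
    plScore (fun u => if u ∈ MU then p else f u) p = #(MUᶜ.filter (f · = p)) + #MU := by
  have hsplit : univ.filter (fun u => (if u ∈ MU then p else f u) = p) =
      MUᶜ.filter (f · = p) ∪ MU := by
    ext u
    by_cases hu : u ∈ MU <;> simp [hu]
  rw [plScore, hsplit, card_union_of_disjoint (disjoint_compl_left.mono_left (filter_subset _ _))]

/-- Constructive control by adding voters for plurality, with cooperating manipulators.
Registered voters `ι` contain manipulators `M` (who all vote for `p`); unregistered
voters `υ` have fixed ballots `unregFixed`, except the unregistered manipulators `MU`,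
who vote for `p`; the chair may add at most `L` unregistered voters.  Then `p` can be
made a winner iff `score(p) + x ≥ score(d)` for every `d ≠ p`, where scores are among
the registered voters (with the manipulators voting for `p`) and
`x = min(L, #unregistered voters for p + #unregistered manipulators)`. -/
theorem stmt15 {ι υ C : Type*} [Fintype ι] [Fintype υ] [DecidableEq ι] [DecidableEq υ]
    [DecidableEq C]
    (fixed : ι → C) (M : Finset ι) (unregFixed : υ → C) (MU : Finset υ) (L : ℕ) (p : C) :
    (∃ S : Finset υ, S.card ≤ L ∧
        ∀ d : C, d ≠ p →
          plScore (fun v => if v ∈ M then p else fixed v) d +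
              (S.filter fun u => (if u ∈ MU then p else unregFixed u) = d).card ≤
            plScore (fun v => if v ∈ M then p else fixed v) p +
              (S.filter fun u => (if u ∈ MU then p else unregFixed u) = p).card) ↔
    (∀ d : C, d ≠ p →
        plScore (fun v => if v ∈ M then p else fixed v) d ≤
          plScore (fun v => if v ∈ M then p else fixed v) p +
            min L ((MUᶜ.filter fun u => unregFixed u = p).card + MU.card)) := by
  rw [← plScore_ite_mem_self]
  exact exists_card_le_add_le_iff_le_add_min _ _ p L
end
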